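/- In a finite directed multigraph with n nodes, the color-refinement sequence of equivalence relations ≃_0, ≃_1, ≃_2, ... (defined by truncated-view isomorphism) stabilizes after at most n−1 steps: ≃_{n-1} = ≃_m for all m ≥ n−1. -/

import Mathlib

/-!
The view of height `k + 1` at `x` is a root with one view of height `k` hanging from each arc
into `x`. Hence `x ≃_{k+1} y` iff some bijection `β` from the arcs into `x` to the arcs into `y`
makes the source of every `a` `≃_k`-equivalent to the source of `β a`: the relation `≃_{k+1}` is
determined by `≃_k`, so once a refinement step changes nothing, no later step does. Every strict
refinement adds an equivalence class and there are at most `n` of them, so one of the steps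
`≃_K → ≃_{K+1}` with `K ≤ n - 1` is trivial.
-/

/-- A directed multigraph: node set `N`, arc set `A`, source and target maps. -/
structure Multigraph (N A : Type) where
  s : A → N
  t : A → N

/-- A homomorphism of directed multigraphs: maps on nodes and arcs commuting
with source and target. -/
structure GraphHom {N A N' A' : Type} (G : Multigraph N A) (B : Multigraph N' A') where
  nodeMap : N → N'
  arcMap : A → A'
  map_s : ∀ a, B.s (arcMap a) = nodeMap (G.s a)
  map_t : ∀ a, B.t (arcMap a) = nodeMap (G.t a)

/-- A fibration: every arc of the base lifts uniquely at every node in the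
fibre of its target. -/
def IsFibration {N A N' A' : Type} {G : Multigraph N A} {B : Multigraph N' A'}
    (φ : GraphHom G B) : Prop :=
  ∀ (a : A') (x : N), φ.nodeMap x = B.t a →
    ∃! a' : A, φ.arcMap a' = a ∧ G.t a' = x

/-- `IsPathTo G l x` : `l` is (the reversed arc list of) a path ending at `x`;
the head of `l` is the arc closest to `x`. The empty list is the empty path at `x`. -/
def IsPathTo {N A : Type} (G : Multigraph N A) : List A → N → Prop
  | [], _ => True
  | a :: l, x => G.t a = x ∧ IsPathTo G l (G.s a)

/-- Nodes of the truncation at height `k` of the view of `G` at `x`. -/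
abbrev ViewTrunc {N A : Type} (G : Multigraph N A) (x : N) (k : ℕ) :=
  {l : List A // IsPathTo G l x ∧ l.length ≤ k}

/-- Isomorphism of the height-`k` truncations of the views at `x` and `y`,
as rooted trees. -/
def ViewTruncIso {N A : Type} (G : Multigraph N A) (x y : N) (k : ℕ) : Prop :=
  ∃ e : ViewTrunc G x k ≃ ViewTrunc G y k,
    ((e ⟨[], by simp [IsPathTo]⟩ : ViewTrunc G y k) : List A) = [] ∧
    ∀ p q : ViewTrunc G x k,
      (∃ a, (p : List A) = (q : List A) ++ [a]) ↔
      (∃ a, ((e p : ViewTrunc G y k) : List A) = ((e q : ViewTrunc G y k) : List A) ++ [a])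

namespace Multigraph

variable {N A : Type} {G : Multigraph N A} {x y : N} {k : ℕ}

def IsChild (p q : List A) : Prop := ∃ a, p = q ++ [a]

lemma not_isChild_nil (q : List A) : ¬ IsChild [] q := by
  simp [IsChild]

lemma isChild_cons_nil (a : A) (l : List A) : IsChild (a :: l) [] ↔ l = [] := by
  simp [IsChild]

lemma isChild_cons_cons (a b : A) (l m : List A) :
    IsChild (a :: l) (b :: m) ↔ a = b ∧ IsChild l m := by
  simp [IsChild]

lemma isPathTo_of_append {l₁ l₂ : List A} (h : IsPathTo G (l₁ ++ l₂) x) : IsPathTo G l₁ x := by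
  induction l₁ generalizing x with
  | nil => trivial
  | cons a l ih => exact ⟨h.1, ih h.2⟩

abbrev InArc (G : Multigraph N A) (x : N) := {a : A // G.t a = x}

namespace ViewTrunc

def root : ViewTrunc G x k := ⟨[], trivial, Nat.zero_le k⟩

def cons (a : InArc G x) (l : ViewTrunc G (G.s a.1) k) : ViewTrunc G x (k + 1) :=
  ⟨a.1 :: l.1, ⟨a.2, l.2.1⟩, Nat.succ_le_succ l.2.2⟩

@[simp] lemma coe_root : (root : ViewTrunc G x k).1 = [] := rfl

@[simp] lemma coe_cons (a : InArc G x) (l : ViewTrunc G (G.s a.1) k) :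
    (cons a l).1 = a.1 :: l.1 := rfl

lemma cons_inj {a : InArc G x} {l m : ViewTrunc G (G.s a.1) k} :
    cons a l = cons a m ↔ l = m := by
  simp [Subtype.ext_iff]

lemma coe_eq_nil {p : ViewTrunc G x k} : (p : List A) = [] ↔ p = root :=
  ⟨fun h => Subtype.ext h, fun h => h ▸ rfl⟩

lemma eq_root_or_cons (p : ViewTrunc G x (k + 1)) :
    p = root ∨ ∃ a l, p = cons a l := by
  obtain ⟨_ | ⟨c, r⟩, h⟩ := p
  · exact .inl rfl
  · exact .inr ⟨⟨c, h.1.1⟩, ⟨r, h.1.2, Nat.le_of_succ_le_succ h.2⟩, rfl⟩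

end ViewTrunc

open ViewTrunc

def viewTruncSuccEquiv (G : Multigraph N A) (x : N) (k : ℕ) :
    ViewTrunc G x (k + 1) ≃ Option (Σ a : InArc G x, ViewTrunc G (G.s a.1) k) where
  toFun
    | ⟨[], _⟩ => none
    | ⟨c :: r, h⟩ => some ⟨⟨c, h.1.1⟩, ⟨r, h.1.2, Nat.le_of_succ_le_succ h.2⟩⟩
  invFun
    | none => root
    | some ⟨a, l⟩ => cons a l
  left_inv := by rintro ⟨_ | ⟨c, r⟩, h⟩ <;> rfl
  right_inv := by rintro (_ | ⟨a, l⟩) <;> rfl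

noncomputable def inArcEquivRootChildren (G : Multigraph N A) (x : N) (k : ℕ) :
    InArc G x ≃ {p : ViewTrunc G x (k + 1) // IsChild p.1 []} :=
  Equiv.ofBijective (fun a => ⟨cons a root, a.1, rfl⟩) <| by
    refine ⟨fun a b h => Subtype.ext ?_, fun ⟨p, hp⟩ => ?_⟩
    · simpa using congrArg (fun p => p.1.1) h
    obtain rfl | ⟨a, l, rfl⟩ := eq_root_or_cons p
    · exact (not_isChild_nil _ hp).elim
    rw [coe_cons, isChild_cons_nil, coe_eq_nil] at hp
    exact ⟨a, by subst hp; rfl⟩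

noncomputable def subtreeEquiv (a : InArc G x) :
    ViewTrunc G (G.s a.1) k ≃ {p : ViewTrunc G x (k + 1) // [a.1] <+: p.1} :=
  Equiv.ofBijective (fun l => ⟨cons a l, by simp⟩) <| by
    refine ⟨fun l m h => cons_inj.1 (congrArg Subtype.val h), fun ⟨p, hp⟩ => ?_⟩
    obtain rfl | ⟨b, l, rfl⟩ := eq_root_or_cons p
    · simp at hp
    obtain rfl : a = b := Subtype.ext (by simpa using hp)
    exact ⟨l, rfl⟩

def IsViewIso (e : ViewTrunc G x k ≃ ViewTrunc G y k) : Prop :=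
  e root = root ∧ ∀ p q, IsChild p.1 q.1 ↔ IsChild (e p).1 (e q).1

lemma viewTruncIso_iff_exists_isViewIso :
    ViewTruncIso G x y k ↔ ∃ e : ViewTrunc G x k ≃ ViewTrunc G y k, IsViewIso e :=
  exists_congr fun _ => and_congr_left' coe_eq_nil

namespace IsViewIso

variable {e : ViewTrunc G x k ≃ ViewTrunc G y k}

lemma apply_eq_root_iff (he : IsViewIso e) {p : ViewTrunc G x k} : e p = root ↔ p = root := by
  rw [← he.1, e.apply_eq_iff_eq]

lemma symm (he : IsViewIso e) : IsViewIso e.symm :=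
  ⟨e.symm_apply_eq.2 he.1.symm, fun p q => by simpa using (he.2 (e.symm p) (e.symm q)).symm⟩

lemma apply_isPrefix (he : IsViewIso e) {p q : ViewTrunc G x k} (h : q.1 <+: p.1) :
    (e q).1 <+: (e p).1 := by
  obtain ⟨r, hr⟩ := h
  induction r using List.reverseRecOn generalizing p with
  | nil => rw [List.append_nil] at hr; rw [Subtype.ext hr]
  | append_singleton r c ih =>
    have hpath : IsPathTo G (q.1 ++ r) x :=
      isPathTo_of_append (l₂ := [c]) (by rw [List.append_assoc, hr]; exact p.2.1)
    have hlen : (q.1 ++ r).length ≤ k := by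
      have := p.2.2
      rw [← hr] at this
      simp only [List.length_append, List.length_singleton] at this ⊢
      omega
    obtain ⟨d, hd⟩ := (he.2 p ⟨q.1 ++ r, hpath, hlen⟩).1 ⟨c, by rw [← hr, List.append_assoc]⟩
    exact (ih (p := ⟨q.1 ++ r, hpath, hlen⟩) rfl).trans (hd ▸ List.prefix_append _ _)

variable {e : ViewTrunc G x (k + 1) ≃ ViewTrunc G y (k + 1)}

lemma isChild_root_iff (he : IsViewIso e) (p : ViewTrunc G x (k + 1)) :
    IsChild p.1 [] ↔ IsChild (e p).1 [] := by
  simpa [he.1] using he.2 p root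

noncomputable def arcEquiv (he : IsViewIso e) : InArc G x ≃ InArc G y :=
  (inArcEquivRootChildren G x k).trans <|
    (e.subtypeEquiv he.isChild_root_iff).trans (inArcEquivRootChildren G y k).symm

lemma apply_cons_root (he : IsViewIso e) (a : InArc G x) :
    e (cons a root) = cons (he.arcEquiv a) root :=
  congrArg Subtype.val ((inArcEquivRootChildren G y k).apply_symm_apply
    (e.subtypeEquiv he.isChild_root_iff (inArcEquivRootChildren G x k a))).symm

lemma viewTruncIso_source_arcEquiv (he : IsViewIso e) (a : InArc G x) :
    ViewTruncIso G (G.s a.1) (G.s (he.arcEquiv a).1) k := by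
  set b := he.arcEquiv a
  have hab : e (cons a root) = cons b root := he.apply_cons_root a
  -- `e` and `e.symm` preserve prefixes, so `e` maps the subtree under `a` onto the one under `b`.
  have hprefix : ∀ p, [a.1] <+: p.1 ↔ [b.1] <+: (e p).1 := fun p => by
    constructor
    · intro h
      simpa [hab] using he.apply_isPrefix (q := cons a root) (by simpa using h)
    · intro h
      simpa [← hab] using he.symm.apply_isPrefix (q := cons b root) (p := e p) (by simpa using h)
  let f := (subtreeEquiv a).trans ((e.subtypeEquiv hprefix).trans (subtreeEquiv b).symm)
  have hf : ∀ l, e (cons a l) = cons b (f l) := fun l =>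
    congrArg Subtype.val ((subtreeEquiv b).apply_symm_apply
      (e.subtypeEquiv hprefix (subtreeEquiv a l))).symm
  refine viewTruncIso_iff_exists_isViewIso.2 ⟨f, ?_, fun l m => ?_⟩
  · rw [← cons_inj (a := b), ← hf, hab]
  · simpa [hf, isChild_cons_cons] using he.2 (cons a l) (cons a m)

end IsViewIso

lemma viewTruncIso_succ_of_equiv (β : InArc G x ≃ InArc G y)
    (f : ∀ a, ViewTrunc G (G.s a.1) k ≃ ViewTrunc G (G.s (β a).1) k) (hf : ∀ a, IsViewIso (f a)) :
    ViewTruncIso G x y (k + 1) := by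
  let e := (viewTruncSuccEquiv G x k).trans
    ((Equiv.optionCongr (Equiv.sigmaCongr β f)).trans (viewTruncSuccEquiv G y k).symm)
  have e_root : e root = root := rfl
  have e_cons : ∀ a l, e (cons a l) = cons (β a) (f a l) := fun _ _ => rfl
  refine viewTruncIso_iff_exists_isViewIso.2 ⟨e, e_root, fun p q => ?_⟩
  obtain rfl | ⟨a, l, rfl⟩ := eq_root_or_cons p
  · rw [e_root]
    exact iff_of_false (not_isChild_nil _) (not_isChild_nil _)
  obtain rfl | ⟨b, m, rfl⟩ := eq_root_or_cons q
  · rw [e_root, e_cons]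
    simp only [coe_cons, coe_root, isChild_cons_nil, coe_eq_nil, (hf a).apply_eq_root_iff]
  rw [e_cons, e_cons]
  simp only [coe_cons, isChild_cons_cons, ← Subtype.ext_iff, β.apply_eq_iff_eq]
  rcases eq_or_ne a b with rfl | hab
  · simpa using (hf a).2 l m
  · simp [hab]

theorem viewTruncIso_succ_iff :
    ViewTruncIso G x y (k + 1) ↔
      ∃ β : InArc G x ≃ InArc G y, ∀ a, ViewTruncIso G (G.s a.1) (G.s (β a).1) k := by
  refine ⟨fun h => ?_, fun ⟨β, hβ⟩ => ?_⟩
  · obtain ⟨e, he⟩ := viewTruncIso_iff_exists_isViewIso.1 h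
    exact ⟨he.arcEquiv, he.viewTruncIso_source_arcEquiv⟩
  · choose f hf using fun a => viewTruncIso_iff_exists_isViewIso.1 (hβ a)
    exact viewTruncIso_succ_of_equiv β f hf

theorem viewTruncIso_zero (G : Multigraph N A) (x y : N) : ViewTruncIso G x y 0 := by
  have h : ∀ {z} (p : ViewTrunc G z 0), p = root := fun p =>
    coe_eq_nil.1 (List.eq_nil_of_length_eq_zero (Nat.le_zero.1 p.2.2))
  refine viewTruncIso_iff_exists_isViewIso.2
    ⟨⟨fun _ => root, fun _ => root, fun p => (h p).symm, fun p => (h p).symm⟩, rfl, fun p q => ?_⟩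
  rw [h p]
  exact iff_of_false (not_isChild_nil _) (not_isChild_nil _)

protected theorem _root_.ViewTruncIso.refl (G : Multigraph N A) (x : N) (k : ℕ) :
    ViewTruncIso G x x k :=
  ⟨Equiv.refl _, rfl, fun _ _ => Iff.rfl⟩

protected theorem _root_.ViewTruncIso.symm : ∀ {k x y}, ViewTruncIso G x y k → ViewTruncIso G y x k
  | 0, _, _, _ => viewTruncIso_zero G _ _
  | _ + 1, _, _, h => by
    obtain ⟨β, hβ⟩ := viewTruncIso_succ_iff.1 h
    exact viewTruncIso_succ_iff.2 ⟨β.symm, fun b => by simpa using (hβ (β.symm b)).symm⟩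

protected theorem _root_.ViewTruncIso.trans {z : N} :
    ∀ {k x y}, ViewTruncIso G x y k → ViewTruncIso G y z k → ViewTruncIso G x z k
  | 0, _, _, _, _ => viewTruncIso_zero G _ _
  | _ + 1, _, _, h, h' => by
    obtain ⟨β, hβ⟩ := viewTruncIso_succ_iff.1 h
    obtain ⟨γ, hγ⟩ := viewTruncIso_succ_iff.1 h'
    exact viewTruncIso_succ_iff.2 ⟨β.trans γ, fun a => (hβ a).trans (hγ (β a))⟩

theorem _root_.ViewTruncIso.of_succ : ∀ {k x y}, ViewTruncIso G x y (k + 1) → ViewTruncIso G x y k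
  | 0, _, _, _ => viewTruncIso_zero G _ _
  | _ + 1, _, _, h => by
    obtain ⟨β, hβ⟩ := viewTruncIso_succ_iff.1 h
    exact viewTruncIso_succ_iff.2 ⟨β, fun a => (hβ a).of_succ⟩

def viewSetoid (G : Multigraph N A) (k : ℕ) : Setoid N where
  r x y := ViewTruncIso G x y k
  iseqv := ⟨fun x => ViewTruncIso.refl G x k, ViewTruncIso.symm, ViewTruncIso.trans⟩

theorem antitone_viewSetoid (G : Multigraph N A) : Antitone (viewSetoid G) :=
  antitone_nat_of_succ_le fun _ _ _ => ViewTruncIso.of_succ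

theorem viewSetoid_le_of_le_succ {K : ℕ} (hK : viewSetoid G K ≤ viewSetoid G (K + 1)) :
    ∀ m, viewSetoid G K ≤ viewSetoid G m
  | 0 => fun x y _ => viewTruncIso_zero G x y
  | m + 1 => fun x y h => by
    obtain ⟨β, hβ⟩ := viewTruncIso_succ_iff.1 (hK h)
    exact viewTruncIso_succ_iff.2 ⟨β, fun a => viewSetoid_le_of_le_succ hK m (hβ a)⟩

end Multigraph

theorem Setoid.natCard_quotient_lt_of_lt {α : Type*} [Finite α] {r s : Setoid α} (h : r < s) :
    Nat.card (Quotient s) < Nat.card (Quotient r) := by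
  classical
  have := Fintype.ofFinite α
  obtain ⟨x, y, hs, hr⟩ : ∃ x y, s x y ∧ ¬ r x y := by
    simpa [Setoid.le_def] using h.2
  simp only [Nat.card_eq_fintype_card]
  refine Fintype.card_lt_of_surjective_not_injective (Setoid.map_of_le h.1)
    (fun q => q.inductionOn fun a => ⟨⟦a⟧, rfl⟩)
    fun hinj => hr (Quotient.exact (hinj (Quotient.sound hs)))

theorem Setoid.exists_le_succ_of_antitone {α : Type*} [Fintype α] {r : ℕ → Setoid α}
    (hr : Antitone r) : ∃ K ≤ Fintype.card α - 1, r K ≤ r (K + 1) := by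
  rcases isEmpty_or_nonempty α with hα | hα
  · exact ⟨0, Nat.zero_le _, fun x => isEmptyElim x⟩
  by_contra! hne
  rw [← Nat.card_eq_fintype_card] at hne
  have hgrow : ∀ K ≤ Nat.card α, K + 1 ≤ Nat.card (Quotient (r K)) := by
    intro K
    induction K with
    | zero => exact fun _ => Nat.card_pos_iff.2 ⟨⟨⟦hα.some⟧⟩, inferInstance⟩
    | succ K ih =>
      intro hK
      have := natCard_quotient_lt_of_lt
        ((hr (Nat.le_add_right K 1)).lt_of_not_ge (hne K (by omega)))
      have := ih (by omega)
      omega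
  have := Nat.card_le_card_of_surjective _ (Quotient.mk'_surjective (s := r (Nat.card α)))
  have := hgrow _ le_rfl
  omega

theorem viewTruncIso_stabilizes_at_card_sub_one_general {N A : Type} [Fintype N]
    (G : Multigraph N A) :
    ∀ m : ℕ, Fintype.card N - 1 ≤ m →
      ∀ x y : N, ViewTruncIso G x y (Fintype.card N - 1) ↔ ViewTruncIso G x y m := by
  intro m hm x y
  obtain ⟨K, hK, hstable⟩ := Setoid.exists_le_succ_of_antitone G.antitone_viewSetoid
  exact ⟨fun h => Multigraph.viewSetoid_le_of_le_succ hstable m (G.antitone_viewSetoid hK h),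
    fun h => G.antitone_viewSetoid hm h⟩

/-- Color refinement stabilizes after at most `n - 1` steps on a graph with
`n` nodes. -/
theorem viewTruncIso_stabilizes_at_card_sub_one {N A : Type} [Fintype N] [Fintype A]
    (G : Multigraph N A) :
    ∀ m : ℕ, Fintype.card N - 1 ≤ m →
      ∀ x y : N, ViewTruncIso G x y (Fintype.card N - 1) ↔ ViewTruncIso G x y m :=
  viewTruncIso_stabilizes_at_card_sub_one_general G
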